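/- Assume A_i = 0 for all i > d for some d ≥ 2, and ρ(V) < 1. For an integer q with 1 ≤ q ≤ d−1, let the mass-embedding choice be A_ℓ(z) = A_ℓ for −1 ≤ ℓ ≤ q−1 and A_q(z) = Σ_{i=q}^d A_i z^{i−q}, and define S_q(z) = I − Σ_{i=−1}^{q−1} A_i zⁱ − A_q(G) z^q for z ≠ 0, where A_q(G) = Σ_{i=q}^d A_i G^{i−q}. Let 1 ≤ q₁ < q₂ ≤ d−1 and suppose the set R_{q₂} = {z ∈ ℂ : |z| > 1, det S_{q₂}(z) = 0} is nonempty with ξ_{q₂} = min{|z| : z ∈ R_{q₂}}. Then every z ∈ ℂ with |z| > 1 and det S_{q₁}(z) = 0 satisfies |z| ≥ ξ_{q₂}; that is, ξ_{q₁} ≥ ξ_{q₂} whenever ξ_{q₁} exists. -/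

import Mathlib

open Matrix

/-- Entrywise order on square real matrices. -/
def Mle {m : ℕ} (X Y : Matrix (Fin m) (Fin m) ℝ) : Prop := ∀ i j, X i j ≤ Y i j

/-- `G` is the minimal nonnegative solution of `X = ∑_{i=0}^∞ A_{i-1} Xⁱ`. -/
def IsMinSol {m : ℕ} (A : ℕ → Matrix (Fin m) (Fin m) ℝ)
    (G : Matrix (Fin m) (Fin m) ℝ) : Prop :=
  Mle 0 G ∧ Summable (fun i => A i * G ^ i) ∧ G = ∑' i, A i * G ^ i ∧
    ∀ Y, Mle 0 Y → Summable (fun i => A i * Y ^ i) → Y = ∑' i, A i * Y ^ i → Mle G Y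

/-- Spectral radius of a real matrix (over `ℂ`). -/
noncomputable def specRad {m : ℕ} (B : Matrix (Fin m) (Fin m) ℝ) : ENNReal :=
  spectralRadius ℂ (B.map (algebraMap ℝ ℂ))

/-- `V = ∑_{j=0}^∞ A_j^*` (shifted index: `A i'` is `A_{i'-1}` of the paper). -/
noncomputable def Vmat {m : ℕ} (A : ℕ → Matrix (Fin m) (Fin m) ℝ)
    (G : Matrix (Fin m) (Fin m) ℝ) : Matrix (Fin m) (Fin m) ℝ :=
  ∑' j : ℕ, ∑' k : ℕ, A (j + k + 1) * G ^ k

/-- For the mass embedding in degree `q+1`: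
`S_q(z) = I - ∑_{i=-1}^{q-1} A_i zⁱ - A_q(G) z^q`, with
`A_q(G) = ∑_{i=q}^∞ A_i G^{i-q} = ∑' k, A (q+k+1) * G^k`. -/
noncomputable def SmatM {m : ℕ} (q : ℕ) (A : ℕ → Matrix (Fin m) (Fin m) ℝ)
    (G : Matrix (Fin m) (Fin m) ℝ) (z : ℂ) : Matrix (Fin m) (Fin m) ℂ :=
  1 - (∑ i ∈ Finset.range (q + 1), (z ^ i * z⁻¹) • (A i).map (algebraMap ℝ ℂ)) -
    z ^ q • ((∑' k : ℕ, A (q + k + 1) * G ^ k).map (algebraMap ℝ ℂ))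

/-!
Write `A*_k = ∑_{i ≥ k} A_i G^{i-k}` and `T_q(z) = I - ∑_{k ≤ q} A*_k z^k`. The fixed-point
equation for `G` gives the factorisation `z S_q(z) = T_q(z) (zI - G)`. A root `z` of
`det S_{q₁}` with `|z| > 1` is therefore an eigenvalue of `G`, and then also a root of
`det S_{q₂}`, or it admits `v ≠ 0` with `v = ∑_{k ≤ q₁} A*_k z^k v`. In the latter case `|v|`
is subinvariant for the nonnegative matrix `N(|z|)`, where `N(x) = ∑_{k ≤ q₂} A*_k x^k`,
while `N(1) ≤ V` and `ρ(V) < 1`.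

For a nonnegative matrix `P`, `ρ(P) < 1` amounts to a positive `w` with `P w < w`, and such a
`w` rules out nonzero `u ≥ 0` with `u ≤ P u`. The set of `x ∈ [1, |z|]` where `N(x)` has such
a `w` contains `1` and is open; wherever `det (I - N(x)) ≠ 0` it is also closed, being cut out
by `(I - N(x))⁻¹ 1 ≥ 0`. As it misses `|z|`, some real `x ∈ (1, |z|]` has
`det (I - N(x)) = 0`, which makes `x` a root of `det S_{q₂}`.
-/

section Nonneg

variable {m : ℕ} {P : Matrix (Fin m) (Fin m) ℝ}

lemma Mle.pow_nonneg (hP : Mle 0 P) (n : ℕ) : Mle 0 (P ^ n) := by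
  induction n with
  | zero => intro i j; rw [pow_zero, one_apply, Matrix.zero_apply]; split_ifs <;> norm_num
  | succ n ih =>
    intro i j
    rw [pow_succ, mul_apply, Matrix.zero_apply]
    exact Finset.sum_nonneg fun l _ => mul_nonneg (by simpa using ih i l) (by simpa using hP l j)

lemma mulVec_mono_of_nonneg (hP : Mle 0 P) {u v : Fin m → ℝ} (huv : u ≤ v) :
    P *ᵥ u ≤ P *ᵥ v := fun i =>
  dotProduct_le_dotProduct_of_nonneg_left huv fun j => by simpa using hP i j

lemma mulVec_nonneg_of_nonneg (hP : Mle 0 P) {u : Fin m → ℝ} (hu : 0 ≤ u) : 0 ≤ P *ᵥ u := by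
  simpa using mulVec_mono_of_nonneg hP hu

/-- For `P ≥ 0` this is equivalent to `ρ(P) < 1`. -/
def HasStrictSubinvariantVec (P : Matrix (Fin m) (Fin m) ℝ) : Prop :=
  ∃ w : Fin m → ℝ, (∀ i, 0 < w i) ∧ ∀ i, (P *ᵥ w) i < w i

lemma HasStrictSubinvariantVec.mono {Q : Matrix (Fin m) (Fin m) ℝ} (hPQ : Mle P Q)
    (hQ : HasStrictSubinvariantVec Q) : HasStrictSubinvariantVec P := by
  obtain ⟨w, hw, hQw⟩ := hQ
  exact ⟨w, hw, fun i => lt_of_le_of_lt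
    (dotProduct_le_dotProduct_of_nonneg_right (hPQ i) fun j => (hw j).le) (hQw i)⟩

lemma eq_zero_of_le_mulVec (hP : Mle 0 P) (hPs : HasStrictSubinvariantVec P) {u : Fin m → ℝ}
    (hu : 0 ≤ u) (huP : u ≤ P *ᵥ u) : u = 0 := by
  obtain ⟨w, hw, hPw⟩ := hPs
  by_contra hne
  obtain ⟨i, hi⟩ := Function.ne_iff.mp hne
  -- compare `u` with the multiple `t • w` touching it at `i₀`
  obtain ⟨i₀, -, hmax⟩ := Finset.exists_max_image Finset.univ (fun j => u j / w j)
    ⟨i, Finset.mem_univ i⟩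
  set t := u i₀ / w i₀
  have ht : 0 < t := lt_of_lt_of_le
    (div_pos (lt_of_le_of_ne (hu i) (Ne.symm hi)) (hw i)) (hmax i (Finset.mem_univ i))
  have hut : u ≤ t • w := fun j => by
    have := hmax j (Finset.mem_univ j)
    rw [div_le_iff₀ (hw j)] at this
    simpa [t] using this
  refine lt_irrefl (u i₀) ?_
  calc u i₀ ≤ (P *ᵥ u) i₀ := huP i₀
    _ ≤ (P *ᵥ (t • w)) i₀ := mulVec_mono_of_nonneg hP hut i₀
    _ = t * (P *ᵥ w) i₀ := by rw [mulVec_smul]; rfl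
    _ < t * w i₀ := mul_lt_mul_of_pos_left (hPw i₀) ht
    _ = u i₀ := div_mul_cancel₀ _ (hw i₀).ne'

lemma nonneg_of_mulVec_le (hP : Mle 0 P) (hPs : HasStrictSubinvariantVec P) {y : Fin m → ℝ}
    (hy : P *ᵥ y ≤ y) : 0 ≤ y := by
  set u : Fin m → ℝ := fun i => max (-y i) 0
  have hu : 0 ≤ u := fun i => le_max_right _ _
  have huP : u ≤ P *ᵥ u := fun i => max_le
    (calc -y i ≤ -(P *ᵥ y) i := neg_le_neg (hy i)
      _ = (P *ᵥ -y) i := by rw [mulVec_neg]; rfl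
      _ ≤ (P *ᵥ u) i := mulVec_mono_of_nonneg hP (fun j => le_max_left _ _) i)
    (mulVec_nonneg_of_nonneg hP hu i)
  intro i
  simpa [u] using congrFun (eq_zero_of_le_mulVec hP hPs hu huP) i

lemma det_one_sub_ne_zero (hP : Mle 0 P) (hPs : HasStrictSubinvariantVec P) :
    (1 - P).det ≠ 0 := by
  intro h
  obtain ⟨v, hv, hPv⟩ := exists_mulVec_eq_zero_iff.mpr h
  rw [sub_mulVec, one_mulVec, sub_eq_zero] at hPv
  have h1 := nonneg_of_mulVec_le hP hPs hPv.ge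
  have h2 := nonneg_of_mulVec_le hP hPs (show P *ᵥ -v ≤ -v by rw [mulVec_neg, ← hPv])
  exact hv (le_antisymm (fun i => by simpa using h2 i) h1)

lemma hasStrictSubinvariantVec_iff_inv_mulVec_nonneg (hP : Mle 0 P)
    (hdet : IsUnit (1 - P).det) :
    HasStrictSubinvariantVec P ↔ 0 ≤ (1 - P)⁻¹ *ᵥ 1 := by
  set y := (1 - P)⁻¹ *ᵥ 1
  have hy : ∀ i, y i = (P *ᵥ y) i + 1 := by
    have : (1 - P) *ᵥ y = 1 := by rw [mulVec_mulVec, mul_nonsing_inv _ hdet, one_mulVec]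
    rw [sub_mulVec, one_mulVec, sub_eq_iff_eq_add'] at this
    exact fun i => congrFun this i
  constructor
  · exact fun hPs => nonneg_of_mulVec_le hP hPs fun i => by linarith [hy i]
  · intro hy0
    have hPy := mulVec_nonneg_of_nonneg hP hy0
    exact ⟨y, fun i => by linarith [hy i, show 0 ≤ (P *ᵥ y) i from hPy i],
      fun i => by linarith [hy i]⟩

lemma exists_pow_mulVec_one_lt_one (hP : Mle 0 P) (h : specRad P < 1) :
    ∃ n, ∀ i, (P ^ n *ᵥ 1) i < 1 := by
  let _ : NormedRing (Matrix (Fin m) (Fin m) ℂ) := Matrix.linftyOpNormedRing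
  let _ : NormedAlgebra ℂ (Matrix (Fin m) (Fin m) ℂ) := Matrix.linftyOpNormedAlgebra
  have _ : CompleteSpace (Matrix (Fin m) (Fin m) ℂ) := FiniteDimensional.complete ℂ _
  set f := (algebraMap ℝ ℂ).mapMatrix (m := Fin m)
  -- Gelfand's formula, for the `ℓ^∞` operator norm: on `P ≥ 0` it is the largest row sum
  obtain ⟨n, hn⟩ := ((spectrum.pow_nnnorm_pow_one_div_tendsto_nhds_spectralRadius
    (f P)).eventually_lt_const h).exists_forall_of_atTop
  have hnorm : ‖f (P ^ (n + 1))‖₊ < 1 := by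
    by_contra! hge
    have := ENNReal.one_le_rpow (ENNReal.one_le_coe_iff.mpr hge)
      (one_div_pos.mpr (Nat.cast_pos.mpr n.succ_pos))
    rw [map_pow] at this
    exact (hn (n + 1) (Nat.le_succ n)).not_ge this
  refine ⟨n + 1, fun i => ?_⟩
  have hrow : ∑ j, ‖f (P ^ (n + 1)) i j‖₊ < 1 := lt_of_le_of_lt
    (Finset.le_sup (f := fun i => ∑ j, ‖f (P ^ (n + 1)) i j‖₊) (Finset.mem_univ i))
    (by rwa [← linfty_opNNNorm_def])
  have hentry : ∀ j, (‖f (P ^ (n + 1)) i j‖₊ : ℝ) = (P ^ (n + 1)) i j := fun j => by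
    simp [f, abs_of_nonneg (by simpa using hP.pow_nonneg (n + 1) i j : 0 ≤ (P ^ (n + 1)) i j)]
  have := NNReal.coe_lt_coe.mpr hrow
  push_cast [hentry] at this
  simpa [mulVec, dotProduct] using this

lemma hasStrictSubinvariantVec_of_pow_mulVec_one_lt_one (hP : Mle 0 P) {n : ℕ}
    (hn : ∀ i, (P ^ n *ᵥ 1) i < 1) : HasStrictSubinvariantVec P := by
  set w := ∑ k ∈ Finset.range n, P ^ k *ᵥ 1
  have hw : 0 ≤ w := Finset.sum_nonneg fun k _ =>
    mulVec_nonneg_of_nonneg (hP.pow_nonneg k) zero_le_one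
  have hPw : P *ᵥ w + 1 = w + P ^ n *ᵥ 1 := by
    have := Finset.sum_range_succ' (fun k => P ^ k *ᵥ 1) n
    rw [Finset.sum_range_succ, pow_zero, one_mulVec] at this
    simpa only [w, mulVec_sum, mulVec_mulVec, ← pow_succ'] using this.symm
  have hPw' : ∀ i, (P *ᵥ w) i < w i := fun i => by
    have := congrFun hPw i
    simp only [Pi.add_apply, Pi.one_apply] at this
    linarith [hn i]
  exact ⟨w, fun i => lt_of_le_of_lt (mulVec_nonneg_of_nonneg hP hw i) (hPw' i), hPw'⟩

lemma hasStrictSubinvariantVec_of_specRad_lt_one (hP : Mle 0 P) (h : specRad P < 1) :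
    HasStrictSubinvariantVec P :=
  have ⟨_, hn⟩ := exists_pow_mulVec_one_lt_one hP h
  hasStrictSubinvariantVec_of_pow_mulVec_one_lt_one hP hn

section Topology

open Set Filter Topology

variable {X : Type*} [TopologicalSpace X] {N : X → Matrix (Fin m) (Fin m) ℝ}

lemma isOpen_setOf_hasStrictSubinvariantVec (hN : Continuous N) :
    IsOpen {x | HasStrictSubinvariantVec (N x)} := by
  refine isOpen_iff_mem_nhds.2 fun x ⟨w, hw, hNw⟩ => ?_
  filter_upwards [eventually_all.2 fun i =>
    (((continuous_apply i).comp (hN.matrix_mulVec continuous_const)).continuousAt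
      (x := x)).eventually_lt continuousAt_const (hNw i)] with y hy
  exact ⟨w, hw, hy⟩

lemma isClosed_setOf_hasStrictSubinvariantVec_inter (hN : Continuous N) {s : Set X}
    (hs : IsClosed s) (hN0 : ∀ x ∈ s, Mle 0 (N x)) (hdet : ∀ x ∈ s, IsUnit (1 - N x).det) :
    IsClosed ({x | HasStrictSubinvariantVec (N x)} ∩ s) := by
  have hinv : ContinuousOn (fun x => (1 - N x)⁻¹ *ᵥ 1) s := fun x hx =>
    ((continuous_id.matrix_mulVec continuous_const).continuousAt.comp
      ((continuousAt_matrix_inv _ (by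
        rw [Ring.inverse_eq_inv']; exact continuousAt_inv₀ (hdet x hx).ne_zero)).comp
      (continuous_const.sub hN).continuousAt)).continuousWithinAt
  convert hinv.preimage_isClosed_of_isClosed hs isClosed_Ici using 1
  ext x
  simp only [mem_inter_iff, mem_preimage, mem_Ici]
  rw [and_comm]
  exact and_congr_right fun hxs =>
    hasStrictSubinvariantVec_iff_inv_mulVec_nonneg (hN0 x hxs) (hdet x hxs)

lemma exists_mem_Ioc_det_one_sub_eq_zero {N : ℝ → Matrix (Fin m) (Fin m) ℝ} (hN : Continuous N)
    {a b : ℝ} (hab : a ≤ b) (hN0 : ∀ x ∈ Icc a b, Mle 0 (N x))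
    (ha : HasStrictSubinvariantVec (N a)) {u : Fin m → ℝ} (hu : 0 ≤ u) (hu0 : u ≠ 0)
    (hub : u ≤ N b *ᵥ u) : ∃ x ∈ Ioc a b, (1 - N x).det = 0 := by
  by_contra! hdet
  have hunit : ∀ x ∈ Icc a b, IsUnit (1 - N x).det := by
    rintro x ⟨hax, hxb⟩
    rcases hax.eq_or_lt with rfl | hax
    · exact (det_one_sub_ne_zero (hN0 _ ⟨le_rfl, hab⟩) ha).isUnit
    · exact (hdet x ⟨hax, hxb⟩).isUnit
  have hclosed := isClosed_setOf_hasStrictSubinvariantVec_inter hN isClosed_Icc hN0 hunit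
  have hb : HasStrictSubinvariantVec (N b) := hclosed.Icc_subset_of_forall_mem_nhdsWithin ha
    (fun x hx => mem_nhdsWithin_of_mem_nhds
      ((isOpen_setOf_hasStrictSubinvariantVec hN).mem_nhds hx.1)) (right_mem_Icc.2 hab)
  exact hu0 (eq_zero_of_le_mulVec (hN0 b (right_mem_Icc.2 hab)) hb hu hub)

end Topology

end Nonneg

section MatPoly

variable {m : ℕ} {R : Type*} [CommRing R] [Algebra ℝ R]

noncomputable def matPoly (C : ℕ → Matrix (Fin m) (Fin m) ℝ) (q : ℕ) (z : R) :
    Matrix (Fin m) (Fin m) R :=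
  ∑ k ∈ Finset.range (q + 1), z ^ k • (C k).map (algebraMap ℝ R)

variable (C : ℕ → Matrix (Fin m) (Fin m) ℝ)

lemma matPoly_zero (z : R) : matPoly C 0 z = (C 0).map (algebraMap ℝ R) := by
  simp [matPoly]

lemma matPoly_succ (q : ℕ) (z : R) :
    matPoly C (q + 1) z = matPoly C q z + z ^ (q + 1) • (C (q + 1)).map (algebraMap ℝ R) :=
  Finset.sum_range_succ _ _

lemma matPoly_apply (q : ℕ) (z : R) (i j : Fin m) :
    matPoly C q z i j = ∑ k ∈ Finset.range (q + 1), z ^ k * algebraMap ℝ R (C k i j) := by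
  simp [matPoly, Matrix.sum_apply]

lemma map_matPoly (q : ℕ) (x : ℝ) :
    (matPoly C q x).map (algebraMap ℝ R) = matPoly C q (algebraMap ℝ R x) := by
  ext i j
  simp [matPoly_apply]

lemma continuous_matPoly (q : ℕ) : Continuous (matPoly C q : ℝ → Matrix (Fin m) (Fin m) ℝ) := by
  unfold matPoly
  fun_prop

variable {C}

lemma matPoly_nonneg (hC : ∀ k, Mle 0 (C k)) (q : ℕ) {x : ℝ} (hx : 0 ≤ x) :
    Mle 0 (matPoly C q x) := fun i j => by
  rw [matPoly_apply, Matrix.zero_apply]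
  exact Finset.sum_nonneg fun k _ => mul_nonneg (pow_nonneg hx k) (by simpa using hC k i j)

lemma norm_matPoly_apply_le (hC : ∀ k, Mle 0 (C k)) {q₁ q₂ : ℕ} (hq : q₁ ≤ q₂) (z : ℂ)
    (i j : Fin m) :
    ‖matPoly C q₁ z i j‖ ≤ matPoly C q₂ ‖z‖ i j := by
  have hCij : ∀ k, 0 ≤ C k i j := fun k => by simpa using hC k i j
  rw [matPoly_apply, matPoly_apply]
  simp only [Algebra.algebraMap_self, RingHom.id_apply]
  calc ‖∑ k ∈ Finset.range (q₁ + 1), z ^ k * algebraMap ℝ ℂ (C k i j)‖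
      ≤ ∑ k ∈ Finset.range (q₁ + 1), ‖z‖ ^ k * C k i j :=
        (norm_sum_le _ _).trans_eq (Finset.sum_congr rfl fun k _ => by
          rw [norm_mul, norm_pow, Complex.coe_algebraMap, Complex.norm_real,
            Real.norm_of_nonneg (hCij k)])
    _ ≤ ∑ k ∈ Finset.range (q₂ + 1), ‖z‖ ^ k * C k i j :=
        Finset.sum_le_sum_of_subset_of_nonneg (Finset.range_subset_range.2 (by omega))
          fun k _ _ => mul_nonneg (by positivity) (hCij k)

lemma exists_real_det_one_sub_matPoly_eq_zero (hC : ∀ k, Mle 0 (C k)) {q₁ q₂ : ℕ}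
    (hq : q₁ ≤ q₂) (h1 : HasStrictSubinvariantVec (matPoly C q₂ (1 : ℝ))) {z : ℂ}
    (hz : 1 ≤ ‖z‖) (hdet : (1 - matPoly C q₁ z).det = 0) :
    ∃ x : ℝ, 1 < x ∧ x ≤ ‖z‖ ∧ (1 - matPoly C q₂ (x : ℂ)).det = 0 := by
  obtain ⟨v, hv, hMv⟩ := exists_mulVec_eq_zero_iff.mpr hdet
  rw [sub_mulVec, one_mulVec, sub_eq_zero] at hMv
  set u : Fin m → ℝ := fun i => ‖v i‖
  have hu0 : u ≠ 0 := fun h => hv (funext fun i => norm_eq_zero.1 (congrFun h i))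
  have hub : u ≤ matPoly C q₂ ‖z‖ *ᵥ u := fun i =>
    calc u i = ‖∑ j, matPoly C q₁ z i j * v j‖ := congrArg norm (congrFun hMv i)
      _ ≤ ∑ j, ‖matPoly C q₁ z i j‖ * u j :=
          (norm_sum_le _ _).trans_eq (Finset.sum_congr rfl fun j _ => norm_mul _ _)
      _ ≤ (matPoly C q₂ ‖z‖ *ᵥ u) i := Finset.sum_le_sum fun j _ =>
          mul_le_mul_of_nonneg_right (norm_matPoly_apply_le hC hq z i j) (norm_nonneg _)
  obtain ⟨x, ⟨hx1, hxz⟩, hx⟩ := exists_mem_Ioc_det_one_sub_eq_zero (continuous_matPoly C q₂) hz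
    (fun x hx => matPoly_nonneg hC q₂ (zero_le_one.trans hx.1)) h1 (fun i => norm_nonneg _)
    hu0 hub
  refine ⟨x, hx1, hxz, ?_⟩
  have hmap : (algebraMap ℝ ℂ).mapMatrix (1 - matPoly C q₂ x) = 1 - matPoly C q₂ (x : ℂ) := by
    rw [map_sub, map_one, RingHom.mapMatrix_apply, map_matPoly]
    rfl
  rw [← hmap, ← RingHom.map_det, hx, map_zero]

end MatPoly

section Queue

variable {A : ℕ → Matrix (Fin m) (Fin m) ℝ} {G : Matrix (Fin m) (Fin m) ℝ} {d : ℕ}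

variable (A G) in
/-- The paper's `A_k^* = ∑_{i ≥ k} A_i G^{i-k}`; `A (i + 1)` is the paper's `A_i`. -/
noncomputable def Astar (k : ℕ) : Matrix (Fin m) (Fin m) ℝ := ∑' j, A (k + j + 1) * G ^ j

lemma summable_mul_pow (hd : ∀ i, d + 1 < i → A i = 0) (n : ℕ) :
    Summable fun j => A (n + j) * G ^ j :=
  summable_of_ne_finset_zero (s := Finset.range (d + 2)) fun j hj => by
    rw [hd _ (by simp at hj; omega), zero_mul]

lemma tsum_mul_pow_eq_add (hd : ∀ i, d + 1 < i → A i = 0) (n : ℕ) :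
    ∑' j, A (n + j) * G ^ j = A n + (∑' j, A (n + 1 + j) * G ^ j) * G := by
  rw [(summable_mul_pow hd n).tsum_eq_zero_add, ← (summable_mul_pow hd (n + 1)).tsum_mul_right]
  simp only [add_zero, pow_zero, mul_one, mul_assoc, ← pow_succ, add_right_comm n 1, add_assoc]

lemma Astar_eq_add (hd : ∀ i, d + 1 < i → A i = 0) (k : ℕ) :
    Astar A G k = A (k + 1) + Astar A G (k + 1) * G := by
  simp only [Astar, add_right_comm _ _ 1]
  exact tsum_mul_pow_eq_add hd (k + 1)

lemma eq_add_Astar_zero_mul (hd : ∀ i, d + 1 < i → A i = 0) (hG : G = ∑' i, A i * G ^ i) :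
    G = A 0 + Astar A G 0 * G := by
  have h := tsum_mul_pow_eq_add (G := G) hd 0
  simp only [zero_add] at h
  simpa [Astar, add_comm _ 1] using hG.trans h

lemma Astar_eq_zero (hd : ∀ i, d + 1 < i → A i = 0) {k : ℕ} (hk : d < k) : Astar A G k = 0 := by
  simp only [Astar]
  rw [tsum_congr fun j => by rw [hd _ (by omega), zero_mul], tsum_zero]

lemma Astar_eq_sum (hd : ∀ i, d + 1 < i → A i = 0) (k : ℕ) :
    Astar A G k = ∑ j ∈ Finset.range (d + 1), A (k + j + 1) * G ^ j :=
  tsum_eq_sum fun j hj => by rw [hd _ (by simp at hj; omega), zero_mul]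

lemma Astar_nonneg (hd : ∀ i, d + 1 < i → A i = 0) (hA : ∀ i, Mle 0 (A i)) (hG : Mle 0 G)
    (k : ℕ) : Mle 0 (Astar A G k) := fun i j => by
  rw [Astar_eq_sum hd, Matrix.sum_apply, Matrix.zero_apply]
  refine Finset.sum_nonneg fun l _ => ?_
  rw [mul_apply]
  exact Finset.sum_nonneg fun p _ =>
    mul_nonneg (by simpa using hA _ i p) (by simpa using hG.pow_nonneg l p j)

lemma Vmat_eq_sum (hd : ∀ i, d + 1 < i → A i = 0) {n : ℕ} (hn : d < n) :
    Vmat A G = ∑ k ∈ Finset.range n, Astar A G k :=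
  tsum_eq_sum fun k hk => Astar_eq_zero hd (by simp at hk; omega)

lemma matPoly_Astar_one_le_Vmat (hd : ∀ i, d + 1 < i → A i = 0) (hA : ∀ i, Mle 0 (A i))
    (hG : Mle 0 G) (q : ℕ) : Mle (matPoly (Astar A G) q (1 : ℝ)) (Vmat A G) := fun i j => by
  rw [matPoly_apply, Vmat_eq_sum hd (n := max (q + 1) (d + 1)) (by omega),
    Matrix.sum_apply]
  simp only [one_pow, one_mul, Algebra.algebraMap_self, RingHom.id_apply]
  exact Finset.sum_le_sum_of_subset_of_nonneg (Finset.range_subset_range.2 (le_max_left _ _))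
    fun k _ _ => by simpa using Astar_nonneg hd hA hG k i j

lemma smul_SmatM (q : ℕ) {z : ℂ} (hz : z ≠ 0) :
    z • SmatM q A G z =
      z • 1 - matPoly A q z - z ^ (q + 1) • (Astar A G q).map (algebraMap ℝ ℂ) := by
  simp only [SmatM, matPoly, smul_sub, Finset.smul_sum, smul_smul, pow_succ']
  congr 3 with i
  field_simp

lemma smul_one_sub_matPoly_sub_eq_mul (hd : ∀ i, d + 1 < i → A i = 0)
    (hG : G = ∑' i, A i * G ^ i) (q : ℕ) (z : ℂ) :
    z • 1 - matPoly A q z - z ^ (q + 1) • (Astar A G q).map (algebraMap ℝ ℂ) =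
      (1 - matPoly (Astar A G) q z) * (z • 1 - G.map (algebraMap ℝ ℂ)) := by
  have hmap : ∀ P Q : Matrix (Fin m) (Fin m) ℝ,
      (P + Q).map (algebraMap ℝ ℂ) = P.map (algebraMap ℝ ℂ) + Q.map (algebraMap ℝ ℂ) :=
    Matrix.map_add _ (map_add _)
  induction q with
  | zero =>
    have h0 : (Astar A G 0).map (algebraMap ℝ ℂ) * G.map (algebraMap ℝ ℂ) =
        G.map (algebraMap ℝ ℂ) - (A 0).map (algebraMap ℝ ℂ) := by
      rw [eq_sub_iff_add_eq', ← Matrix.map_mul, ← hmap, ← eq_add_Astar_zero_mul hd hG]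
    rw [matPoly_zero, matPoly_zero, sub_mul, one_mul, mul_sub, mul_smul_comm, mul_one, h0]
    module
  | succ q ih =>
    have hq : (Astar A G (q + 1)).map (algebraMap ℝ ℂ) * G.map (algebraMap ℝ ℂ) =
        (Astar A G q).map (algebraMap ℝ ℂ) - (A (q + 1)).map (algebraMap ℝ ℂ) := by
      rw [eq_sub_iff_add_eq', ← Matrix.map_mul, ← hmap, ← Astar_eq_add hd]
    rw [matPoly_succ, matPoly_succ, sub_add_eq_sub_sub, sub_add_eq_sub_sub, sub_mul, ← ih,
      smul_mul_assoc, mul_sub, mul_smul_comm, mul_one, hq]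
    module

lemma det_SmatM_eq_zero_iff (hd : ∀ i, d + 1 < i → A i = 0) (hG : G = ∑' i, A i * G ^ i)
    (q : ℕ) {z : ℂ} (hz : z ≠ 0) :
    (SmatM q A G z).det = 0 ↔
      (1 - matPoly (Astar A G) q z).det = 0 ∨ (z • 1 - G.map (algebraMap ℝ ℂ)).det = 0 := by
  have h := congrArg det ((smul_SmatM q hz).trans (smul_one_sub_matPoly_sub_eq_mul hd hG q z))
  rw [det_smul, det_mul, Fintype.card_fin] at h
  rw [← mul_eq_zero, ← h, mul_eq_zero, or_iff_right (pow_ne_zero _ hz)]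

lemma hasStrictSubinvariantVec_matPoly_Astar_one (hd : ∀ i, d + 1 < i → A i = 0)
    (hA : ∀ i, Mle 0 (A i)) (hG : Mle 0 G) (hρ : specRad (Vmat A G) < 1) (q : ℕ) :
    HasStrictSubinvariantVec (matPoly (Astar A G) q (1 : ℝ)) := by
  have hV : Mle 0 (Vmat A G) := fun i j => by
    rw [Vmat_eq_sum hd d.lt_succ_self, Matrix.sum_apply]
    exact Finset.sum_nonneg fun k _ => Astar_nonneg hd hA hG k i j
  exact (hasStrictSubinvariantVec_of_specRad_lt_one hV hρ).mono
    (matPoly_Astar_one_le_Vmat hd hA hG q)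

end Queue

theorem stmt14_general (m : ℕ) (d : ℕ)
    (A : ℕ → Matrix (Fin m) (Fin m) ℝ)
    (hA0 : ∀ i, Mle 0 (A i))
    (hd : ∀ i, d + 1 < i → A i = 0)
    (G : Matrix (Fin m) (Fin m) ℝ) (hG : IsMinSol A G)
    (hρ : specRad (Vmat A G) < 1)
    (q₁ q₂ : ℕ) (hq₁₂ : q₁ < q₂)
    -- `ξ_{q₂} = ‖z₂‖`, the minimum modulus of roots of `det S_{q₂}` outside the
    -- closed unit disk (the set `R_{q₂}` of such roots being nonempty):
    (z₂ : ℂ)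
    (hz₂min : ∀ w : ℂ, 1 < ‖w‖ → (SmatM q₂ A G w).det = 0 → ‖z₂‖ ≤ ‖w‖) :
    ∀ z : ℂ, 1 < ‖z‖ → (SmatM q₁ A G z).det = 0 → ‖z₂‖ ≤ ‖z‖ := by
  intro z hz hroot
  obtain ⟨hG0, -, hGsol, -⟩ := hG
  have hz0 : z ≠ 0 := norm_pos_iff.1 (one_pos.trans hz)
  rcases (det_SmatM_eq_zero_iff hd hGsol q₁ hz0).1 hroot with hT | hGz
  · obtain ⟨x, hx1, hxz, hx⟩ := exists_real_det_one_sub_matPoly_eq_zero (Astar_nonneg hd hA0 hG0)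
      hq₁₂.le (hasStrictSubinvariantVec_matPoly_Astar_one hd hA0 hG0 hρ q₂) hz.le hT
    have hxn : ‖(x : ℂ)‖ = x := by rw [Complex.norm_real, Real.norm_of_nonneg (by linarith)]
    have hx0 : (x : ℂ) ≠ 0 := Complex.ofReal_ne_zero.2 (by linarith)
    calc ‖z₂‖ ≤ ‖(x : ℂ)‖ :=
          hz₂min x (hx1.trans_eq hxn.symm) ((det_SmatM_eq_zero_iff hd hGsol q₂ hx0).2 (.inl hx))
      _ ≤ ‖z‖ := hxn.trans_le hxz
  · exact hz₂min z hz ((det_SmatM_eq_zero_iff hd hGsol q₂ hz0).2 (.inr hGz))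

/-- for mass embeddings of degrees `q₁+1 < q₂+1`, every root of
`det S_{q₁}` of modulus `> 1` has modulus at least
`ξ_{q₂} = min{|z| : |z| > 1, det S_{q₂}(z) = 0}`, i.e. `ξ_{q₁} ≥ ξ_{q₂}`. -/
theorem stmt14 (m : ℕ) (hm : 1 ≤ m) (d : ℕ) (hd2 : 2 ≤ d)
    (A : ℕ → Matrix (Fin m) (Fin m) ℝ)
    (hA0 : ∀ i, Mle 0 (A i))
    (hrow : ∀ k, ∑ j, (∑' i, A i) k j ≤ 1)
    (hd : ∀ i, d + 1 < i → A i = 0)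
    (G : Matrix (Fin m) (Fin m) ℝ) (hG : IsMinSol A G)
    (hρ : specRad (Vmat A G) < 1)
    (q₁ q₂ : ℕ) (hq₁ : 1 ≤ q₁) (hq₁₂ : q₁ < q₂) (hq₂ : q₂ ≤ d - 1)
    -- `ξ_{q₂} = ‖z₂‖`, the minimum modulus of roots of `det S_{q₂}` outside the
    -- closed unit disk (the set `R_{q₂}` of such roots being nonempty):
    (z₂ : ℂ) (hz₂ : 1 < ‖z₂‖) (hz₂root : (SmatM q₂ A G z₂).det = 0)
    (hz₂min : ∀ w : ℂ, 1 < ‖w‖ → (SmatM q₂ A G w).det = 0 → ‖z₂‖ ≤ ‖w‖) :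
    ∀ z : ℂ, 1 < ‖z‖ → (SmatM q₁ A G z).det = 0 → ‖z₂‖ ≤ ‖z‖ :=
  stmt14_general m d A hA0 hd G hG hρ q₁ q₂ hq₁₂ z₂ hz₂min
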